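/- arXiv:2005.03838 — 3 statements merged into one kernel-verified Lean document; each statement's English description precedes it below -/
import Mathlib

section
/- Fix n ≥ 1 and indices l ≠ i in {0,…,n−1}. Let P be a symmetric real n×n matrix with zero diagonal and P_{a,b} ∈ {−1,1} for a ≠ b, and let N be a real antisymmetric n×n matrix with N_{a,b} ∈ {−1,1} whenever a, b, l are pairwise distinct, and with the l-th row and column zero and zero diagonal. Define R_{l,i} = (1/8) · Σ over ordered pairs (j,k) with j ≠ k and j, k ∈ {0,…,n−1} \ {l} of (1 + a·b + b·c + c·a), where a = P_{i,l}P_{j,l}N_{i,j}, b = P_{j,l}P_{k,l}N_{j,k}, c = P_{k,l}P_{i,l}N_{k,i}. Then R_{l,i} = (1/8) · { n(n−2) + 2 P_{i,l} (N²P)_{i,l} − ((NP)_{i,l})² }. -/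
open Finset Matrix

private def Fm {n : ℕ} (l i : Fin n) (P N : Matrix (Fin n) (Fin n) ℝ) (j k : Fin n) : ℝ :=
  1 + (P i l * P j l * N i j) * (P j l * P k l * N j k)
    + (P j l * P k l * N j k) * (P k l * P i l * N k i)
    + (P k l * P i l * N k i) * (P i l * P j l * N i j)

theorem ring_matrix_closed_form (n : ℕ) (hn : 1 ≤ n) (l i : Fin n) (hli : l ≠ i)
    (P N : Matrix (Fin n) (Fin n) ℝ)
    (hPsymm : Pᵀ = P) (hPdiag : ∀ a, P a a = 0)
    (hPsign : ∀ a b, a ≠ b → (P a b = -1 ∨ P a b = 1))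
    (hNanti : Nᵀ = -N) (hNdiag : ∀ a, N a a = 0)
    (hNl : ∀ a, N l a = 0 ∧ N a l = 0)
    (hNsign : ∀ a b, a ≠ b → a ≠ l → b ≠ l → (N a b = -1 ∨ N a b = 1)) :
    (1/8 : ℝ) * ∑ j ∈ Finset.univ.erase l, ∑ k ∈ (Finset.univ.erase l).erase j,
        (1 + (P i l * P j l * N i j) * (P j l * P k l * N j k)
           + (P j l * P k l * N j k) * (P k l * P i l * N k i)
           + (P k l * P i l * N k i) * (P i l * P j l * N i j))
      = (1/8 : ℝ) * ((n : ℝ) * ((n : ℝ) - 2) + 2 * P i l * ((N * N * P) i l)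
          - ((N * P) i l)^2) := by
  have hil : i ≠ l := Ne.symm hli
  have hNanti' : ∀ a b, N a b = -N b a := by
    intro a b
    have h := congrFun (congrFun hNanti b) a
    simpa [Matrix.transpose_apply, Matrix.neg_apply, neg_eq_iff_eq_neg] using h
  have hP2 : ∀ a, a ≠ l → P a l * P a l = 1 := by
    intro a ha
    rcases hPsign a l ha with h | h <;> rw [h] <;> ring
  have hPil : P i l * P i l = 1 := hP2 i hil
  have hN2 : ∀ a b, a ≠ b → a ≠ l → b ≠ l → N a b * N a b = 1 := by
    intro a b h1 h2 h3
    rcases hNsign a b h1 h2 h3 with h | h <;> rw [h] <;> ring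
  set G := Fm l i P N with hG
  -- values on degenerate lines
  have hGjl : ∀ j, G j l = 1 := by
    intro j
    simp [hG, Fm, hPdiag, (hNl j).2, (hNl i).1]
  have hGlk : ∀ k, G l k = 1 := by
    intro k
    simp [hG, Fm, hPdiag, (hNl k).1, (hNl i).2]
  have hGjj : ∀ j, G j j = (if j = i then (1:ℝ) else 0) + (if j = l then 1 else 0) := by
    intro j
    by_cases h1 : j = i
    · subst h1
      simp [hG, Fm, hNdiag, hil]
    · by_cases h2 : j = l
      · subst h2
        simp [hG, Fm, hPdiag, h1]
      · have e1 : P j l * P j l = 1 := hP2 j h2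
        have e2 : N i j * N i j = 1 := hN2 i j (Ne.symm h1) hil h2
        simp only [hG, Fm, hNdiag, mul_zero, zero_mul, add_zero, if_neg h1, if_neg h2]
        rw [hNanti' j i]
        linear_combination (-(P j l * P j l) * (N i j * N i j)) * hPil
          + (-(N i j * N i j)) * e1 + (-1 : ℝ) * e2
  have hsumjj : ∑ j, G j j = 2 := by
    simp only [hGjj, Finset.sum_add_distrib, Finset.sum_ite_eq', Finset.mem_univ, if_true]
    norm_num
  have hsumjl : ∑ j : Fin n, G j l = (n : ℝ) := by
    simp [hGjl]
  have hsumlk : ∑ k : Fin n, G l k = (n : ℝ) := by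
    simp [hGlk]
  -- the three full double sums
  have hab : ∑ j : Fin n, ∑ k : Fin n,
      (P i l * P j l * N i j) * (P j l * P k l * N j k) = P i l * ((N * N * P) i l) := by
    rw [Finset.sum_comm, Matrix.mul_apply, Finset.mul_sum]
    refine Finset.sum_congr rfl fun k _ => ?_
    rw [Matrix.mul_apply, Finset.sum_mul, Finset.mul_sum]
    refine Finset.sum_congr rfl fun j _ => ?_
    by_cases h : j = l
    · subst h; simp [(hNl k).1]
    · have e1 : P j l * P j l = 1 := hP2 j h
      linear_combination (P i l * N i j * N j k * P k l) * e1
  have hbc : ∑ j : Fin n, ∑ k : Fin n,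
      (P j l * P k l * N j k) * (P k l * P i l * N k i)
      = ∑ j : Fin n, ∑ k : Fin n, (P i l * P j l * N i j) * (P j l * P k l * N j k) := by
    rw [Finset.sum_comm]
    refine Finset.sum_congr rfl fun j _ => Finset.sum_congr rfl fun k _ => ?_
    rw [hNanti' k j, hNanti' j i]
    ring
  have hca : ∑ j : Fin n, ∑ k : Fin n,
      (P k l * P i l * N k i) * (P i l * P j l * N i j) = -((N * P) i l)^2 := by
    have expand : ((N * P) i l)^2
        = ∑ j : Fin n, ∑ k : Fin n, (N i j * P j l) * (N i k * P k l) := by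
      rw [Matrix.mul_apply, sq, Finset.sum_mul_sum]
    rw [expand, ← Finset.sum_neg_distrib]
    refine Finset.sum_congr rfl fun j _ => ?_
    rw [← Finset.sum_neg_distrib]
    refine Finset.sum_congr rfl fun k _ => ?_
    rw [hNanti' k i]
    linear_combination (-(N i k * N i j * P j l * P k l)) * hPil
  -- split the full double sum of G
  have hsplit : ∑ j : Fin n, ∑ k : Fin n, G j k
      = (n : ℝ) * (n : ℝ)
        + (∑ j : Fin n, ∑ k : Fin n, (P i l * P j l * N i j) * (P j l * P k l * N j k))
        + (∑ j : Fin n, ∑ k : Fin n, (P j l * P k l * N j k) * (P k l * P i l * N k i))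
        + (∑ j : Fin n, ∑ k : Fin n, (P k l * P i l * N k i) * (P i l * P j l * N i j)) := by
    simp only [hG, Fm, Finset.sum_add_distrib, Finset.sum_const, Finset.card_univ,
      Fintype.card_fin, nsmul_eq_mul, mul_one]
  -- reduce the restricted sum to full sums
  have step1 : ∀ j ∈ Finset.univ.erase l,
      ∑ k ∈ (Finset.univ.erase l).erase j, G j k
        = (∑ k : Fin n, G j k) - G j l - G j j := by
    intro j hj
    rw [Finset.sum_erase_eq_sub hj, Finset.sum_erase_eq_sub (Finset.mem_univ l)]
  have main : ∑ j ∈ Finset.univ.erase l, ∑ k ∈ (Finset.univ.erase l).erase j, G j k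
      = (n : ℝ) * ((n : ℝ) - 2) + 2 * P i l * ((N * N * P) i l) - ((N * P) i l)^2 := by
    calc ∑ j ∈ Finset.univ.erase l, ∑ k ∈ (Finset.univ.erase l).erase j, G j k
        = ∑ j ∈ Finset.univ.erase l, ((∑ k : Fin n, G j k) - G j l - G j j) :=
          Finset.sum_congr rfl step1
      _ = (∑ j : Fin n, ((∑ k : Fin n, G j k) - G j l - G j j))
            - ((∑ k : Fin n, G l k) - G l l - G l l) := by
          rw [Finset.sum_erase_eq_sub (Finset.mem_univ l)]
      _ = (∑ j : Fin n, ∑ k : Fin n, G j k) - (∑ j : Fin n, G j l) - (∑ j : Fin n, G j j)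
            - (∑ k : Fin n, G l k) + 2 * G l l := by
          rw [Finset.sum_sub_distrib, Finset.sum_sub_distrib]; ring
      _ = (n : ℝ) * ((n : ℝ) - 2) + 2 * P i l * ((N * N * P) i l) - ((N * P) i l)^2 := by
          rw [hsplit, hbc, hab, hca, hsumjl, hsumjj, hsumlk, hGlk l]
          ring
  have hshow : ∑ j ∈ Finset.univ.erase l, ∑ k ∈ (Finset.univ.erase l).erase j,
      (1 + (P i l * P j l * N i j) * (P j l * P k l * N j k)
         + (P j l * P k l * N j k) * (P k l * P i l * N k i)
         + (P k l * P i l * N k i) * (P i l * P j l * N i j))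
      = ∑ j ∈ Finset.univ.erase l, ∑ k ∈ (Finset.univ.erase l).erase j, G j k := rfl
  rw [hshow, main]
end

section
/- Let v₁, …, v_m ∈ ℝ² be nonzero vectors that are pairwise linearly independent. Then there exist signs ε₁, …, ε_m ∈ {−1,1} and a permutation σ of {1,…,m} such that for all j < k, the 2D cross product (ε_{σ(j)} v_{σ(j)}) × (ε_{σ(k)} v_{σ(k)}) > 0 (where (a₁,a₂) × (b₁,b₂) = a₁b₂ − a₂b₁). -/
/-!
Flip each vector by a sign into the half-plane `{y > 0} ∪ {y = 0, x > 0}`, where its argument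
`θ` lies in `[0, π)`, and list the vectors by increasing argument. Since
`a × b = |a| |b| sin (θ b - θ a)`, equal arguments would make two vectors parallel, and for
`θ a < θ b` the difference lies in `(0, π)`, so the cross product is positive.
-/

open Complex Real Set

namespace Plane

def cross (a b : Fin 2 → ℝ) : ℝ := a 0 * b 1 - a 1 * b 0

def toComplex (a : Fin 2 → ℝ) : ℂ := ⟨a 0, a 1⟩

noncomputable def angle (a : Fin 2 → ℝ) : ℝ := arg (toComplex a)

noncomputable def halfPlaneSign (a : Fin 2 → ℝ) : ℝ :=
  if 0 < a 1 ∨ (a 1 = 0 ∧ 0 < a 0) then 1 else -1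

theorem halfPlaneSign_eq_neg_one_or_one (a : Fin 2 → ℝ) :
    halfPlaneSign a = -1 ∨ halfPlaneSign a = 1 := by
  unfold halfPlaneSign
  split_ifs <;> simp

theorem halfPlaneSign_ne_zero (a : Fin 2 → ℝ) : halfPlaneSign a ≠ 0 := by
  rcases halfPlaneSign_eq_neg_one_or_one a with h | h <;> norm_num [h]

theorem angle_halfPlaneSign_smul_mem_Ico (a : Fin 2 → ℝ) :
    angle (halfPlaneSign a • a) ∈ Ico 0 π := by
  rw [angle, mem_Ico, arg_nonneg_iff, (arg_le_pi _).lt_iff_ne, Ne, arg_eq_pi_iff]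
  unfold halfPlaneSign
  split_ifs with h <;> simp only [toComplex, Pi.smul_apply, smul_eq_mul] <;> grind

theorem cross_smul_smul (s t : ℝ) (a b : Fin 2 → ℝ) :
    cross (s • a) (t • b) = s * t * cross a b := by
  simp only [cross, Pi.smul_apply, smul_eq_mul]
  ring

theorem cross_ne_zero_of_linearIndependent {a b : Fin 2 → ℝ}
    (h : LinearIndependent ℝ ![a, b]) : cross a b ≠ 0 := by
  have hA : IsUnit (Matrix.of ![a, b]) := Matrix.linearIndependent_rows_iff_isUnit.mp h
  rwa [Matrix.isUnit_iff_isUnit_det, isUnit_iff_ne_zero, Matrix.det_fin_two] at hA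

theorem cross_eq_norm_mul_sin (a b : Fin 2 → ℝ) :
    cross a b = ‖toComplex a‖ * ‖toComplex b‖ * Real.sin (angle b - angle a) := by
  have ha₀ : ‖toComplex a‖ * Real.cos (angle a) = a 0 := norm_mul_cos_arg _
  have ha₁ : ‖toComplex a‖ * Real.sin (angle a) = a 1 := norm_mul_sin_arg _
  have hb₀ : ‖toComplex b‖ * Real.cos (angle b) = b 0 := norm_mul_cos_arg _
  have hb₁ : ‖toComplex b‖ * Real.sin (angle b) = b 1 := norm_mul_sin_arg _
  rw [cross, Real.sin_sub, ← ha₀, ← ha₁, ← hb₀, ← hb₁]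
  ring

theorem cross_eq_zero_of_angle_eq {a b : Fin 2 → ℝ} (h : angle a = angle b) : cross a b = 0 := by
  rw [cross_eq_norm_mul_sin, h, sub_self, Real.sin_zero, mul_zero]

theorem cross_pos_of_angle_lt {a b : Fin 2 → ℝ} (hab : cross a b ≠ 0) (ha : 0 ≤ angle a)
    (hlt : angle a < angle b) (hb : angle b < π) : 0 < cross a b := by
  have hsin : 0 < Real.sin (angle b - angle a) :=
    Real.sin_pos_of_pos_of_lt_pi (by linarith) (by linarith)
  have hnonneg : 0 ≤ cross a b := by
    rw [cross_eq_norm_mul_sin]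
    positivity
  exact hnonneg.lt_of_ne hab.symm

end Plane

open Plane in
/-- The 'fan' property: pairwise non-parallel plane vectors can be reoriented by
signs and reordered so that all pairs are positively oriented. -/
theorem fan_ordering (m : ℕ) (v : Fin m → (Fin 2 → ℝ))
    (hpair : ∀ j k : Fin m, j ≠ k → LinearIndependent ℝ ![v j, v k]) :
    ∃ (ε : Fin m → ℝ) (σ : Equiv.Perm (Fin m)),
      (∀ j, ε j = -1 ∨ ε j = 1) ∧
      ∀ j k : Fin m, j < k →
        0 < (ε (σ j) • v (σ j)) 0 * (ε (σ k) • v (σ k)) 1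
            - (ε (σ j) • v (σ j)) 1 * (ε (σ k) • v (σ k)) 0 := by
  set ε : Fin m → ℝ := fun j => halfPlaneSign (v j)
  set θ : Fin m → ℝ := fun j => angle (ε j • v j)
  have hcross : ∀ j k, j ≠ k → cross (ε j • v j) (ε k • v k) ≠ 0 := fun j k hjk => by
    rw [cross_smul_smul]
    exact mul_ne_zero (mul_ne_zero (halfPlaneSign_ne_zero _) (halfPlaneSign_ne_zero _))
      (cross_ne_zero_of_linearIndependent (hpair j k hjk))
  have hθ : Function.Injective θ := fun j k h =>
    by_contra fun hjk => hcross j k hjk (cross_eq_zero_of_angle_eq h)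
  set σ := Tuple.sort θ
  have hσ : StrictMono (θ ∘ σ) :=
    (Tuple.monotone_sort θ).strictMono_of_injective (hθ.comp σ.injective)
  refine ⟨ε, σ, fun j => halfPlaneSign_eq_neg_one_or_one _, fun j k hjk => ?_⟩
  exact cross_pos_of_angle_lt (hcross _ _ (σ.injective.ne hjk.ne))
    (angle_halfPlaneSign_smul_mem_Ico _).1 (hσ hjk) (angle_halfPlaneSign_smul_mem_Ico _).2
end

section
/- Let n₁, n₂ be linearly independent unit vectors in ℝ³ and v₁, v₂ ∈ ℝ³ with d = det(n₁, n₂, v₁ − v₂) ≠ 0. Then the improper double integral (1/(4π)) ∫_{−∞}^{∞} ∫_{−∞}^{∞} det(n₁, n₂, γ₁(s) − γ₂(t)) / |γ₁(s) − γ₂(t)|³ ds dt, where γ₁(s) = n₁ s + v₁ and γ₂(t) = n₂ t + v₂, converges and equals (1/2)·sign(d). -/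
open Matrix MeasureTheory Real

/-- The scalar triple product `det(a, b, c)` of three vectors of Euclidean 3-space. -/
def tripleDet (a b c : EuclideanSpace ℝ (Fin 3)) : ℝ :=
  (Matrix.of ![fun i => a i, fun i => b i, fun i => c i]).det

/-! The numerator is the constant `d = tripleDet n₁ n₂ (v₁ - v₂)`, since `γ₁(s) - γ₂(t)` differs
from `v₁ - v₂` by a combination of `n₁` and `n₂`. For fixed `s`, `‖γ₁(s) - γ₂(t)‖²` equals
`(t - t₀(s))² + g(s)`, where `g(s)` is the squared distance from `γ₁(s)` to the second line, and
`∫ dt / ((t - t₀)² + g)^(3/2) = 2 / g`. Now `g` is a quadratic in `s` whose discriminant is `-4 d²`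
by the Gram identity for `d²`, so `∫ 2 / g(s) ds = 2π / |d|`, and the linking integral is
`d / (2 |d|)`. -/

open Filter Topology RealInnerProductSpace

lemma Real.div_abs_eq_sign (r : ℝ) : r / |r| = Real.sign r := by
  rcases lt_trichotomy r 0 with hr | rfl | hr
  · rw [abs_of_neg hr, Real.sign_of_neg hr, div_neg, div_self hr.ne]
  · simp [Real.sign_zero]
  · rw [abs_of_pos hr, Real.sign_of_pos hr, div_self hr.ne']

section InverseQuadratic

variable {a b c : ℝ}

lemma quadratic_eq_mul_one_add_sq (ha : 0 < a) (h : discrim a b c < 0) (x : ℝ) :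
    a * (x * x) + b * x + c
      = -discrim a b c / (4 * a) * (1 + (2 * a / √(-discrim a b c) * (x + b / (2 * a))) ^ 2) := by
  have hD : 0 < -discrim a b c := neg_pos.2 h
  have := h.ne
  rw [mul_pow, div_pow, sq_sqrt hD.le]
  field_simp
  rw [discrim]
  ring

lemma quadratic_pos_of_discrim_neg (ha : 0 < a) (h : discrim a b c < 0) (x : ℝ) :
    0 < a * (x * x) + b * x + c := by
  rw [quadratic_eq_mul_one_add_sq ha h]
  have := neg_pos.2 h
  positivity

lemma integrable_inv_quadratic (ha : 0 < a) (h : discrim a b c < 0) :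
    Integrable fun x => (a * (x * x) + b * x + c)⁻¹ := by
  have hr : 2 * a / √(-discrim a b c) ≠ 0 := by
    have := neg_pos.2 h
    positivity
  simp_rw [quadratic_eq_mul_one_add_sq ha h, mul_inv]
  exact ((integrable_inv_one_add_sq.comp_mul_left' hr).comp_add_right _).const_mul _

lemma integral_inv_quadratic (ha : 0 < a) (h : discrim a b c < 0) :
    ∫ x, (a * (x * x) + b * x + c)⁻¹ = 2 * π / √(-discrim a b c) := by
  have hD : 0 < -discrim a b c := neg_pos.2 h
  simp_rw [quadratic_eq_mul_one_add_sq ha h, mul_inv]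
  rw [integral_const_mul,
    integral_add_right_eq_self (fun x => (1 + (2 * a / √(-discrim a b c) * x) ^ 2)⁻¹),
    Measure.integral_comp_mul_left (fun y => (1 + y ^ 2)⁻¹), integral_univ_inv_one_add_sq,
    smul_eq_mul, abs_of_pos (by positivity)]
  have hs : √(-discrim a b c) ^ 2 = -discrim a b c := sq_sqrt hD.le
  have := h.ne
  field_simp
  rw [hs]
  ring

end InverseQuadratic

section Kernel

variable {c : ℝ}

lemma hasDerivAt_div_mul_sqrt_sq_add (hc : 0 < c) (x : ℝ) :
    HasDerivAt (fun x => x / (c * √(x ^ 2 + c))) (√(x ^ 2 + c) ^ 3)⁻¹ x := by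
  have hpos : 0 < x ^ 2 + c := by positivity
  have hsqrt : HasDerivAt (fun x => √(x ^ 2 + c)) (2 * x / (2 * √(x ^ 2 + c))) x := by
    simpa using ((hasDerivAt_pow 2 x).add_const c).sqrt hpos.ne'
  have hs : 0 < √(x ^ 2 + c) := sqrt_pos.2 hpos
  refine ((hasDerivAt_id' x).div (hsqrt.const_mul c) (by positivity)).congr_deriv ?_
  have hsq : √(x ^ 2 + c) ^ 2 = x ^ 2 + c := sq_sqrt hpos.le
  field_simp
  linear_combination hsq

lemma tendsto_div_sqrt_sq_add_atTop (c : ℝ) :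
    Tendsto (fun x => x / √(x ^ 2 + c)) atTop (𝓝 1) := by
  have h : Tendsto (fun x : ℝ => (√(1 + c * (x ^ 2)⁻¹))⁻¹) atTop (𝓝 1) := by
    have := ((tendsto_pow_atTop two_ne_zero).inv_tendsto_atTop.const_mul c).const_add 1
    simpa using this.sqrt.inv₀ (by simp)
  refine h.congr' ?_
  filter_upwards [eventually_gt_atTop 0] with x hx
  rw [show x ^ 2 + c = x ^ 2 * (1 + c * (x ^ 2)⁻¹) by field_simp, sqrt_mul (sq_nonneg x),
    sqrt_sq hx.le, div_mul_cancel_left₀ hx.ne']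

lemma integrable_inv_sqrt_sq_add_pow_three (hc : 0 < c) :
    Integrable fun x => (√(x ^ 2 + c) ^ 3)⁻¹ := by
  have hquad : Integrable fun x => (x ^ 2 + c)⁻¹ := by
    simpa [← sq] using integrable_inv_quadratic one_pos (b := 0) (by simp [discrim]; linarith)
  refine (hquad.const_mul (√c)⁻¹).mono' (by fun_prop) (Eventually.of_forall fun x => ?_)
  have hpos : 0 < x ^ 2 + c := by positivity
  have hcube : √(x ^ 2 + c) ^ 3 = √(x ^ 2 + c) * (x ^ 2 + c) := by
    rw [pow_succ', sq_sqrt hpos.le]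
  rw [norm_inv, norm_pow, norm_of_nonneg (sqrt_nonneg _), hcube, mul_inv]
  gcongr
  exact le_add_of_nonneg_left (sq_nonneg x)

lemma integral_inv_sqrt_sq_add_pow_three (hc : 0 < c) :
    ∫ x, (√(x ^ 2 + c) ^ 3)⁻¹ = 2 / c := by
  have htop : Tendsto (fun x => x / (c * √(x ^ 2 + c))) atTop (𝓝 c⁻¹) := by
    have h := (tendsto_div_sqrt_sq_add_atTop c).const_mul c⁻¹
    rw [mul_one] at h
    exact h.congr fun x => by ring
  have hbot : Tendsto (fun x => x / (c * √(x ^ 2 + c))) atBot (𝓝 (-c⁻¹)) := by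
    simpa [neg_div] using (htop.comp tendsto_neg_atBot_atTop).neg
  rw [integral_of_hasDerivAt_of_tendsto (hasDerivAt_div_mul_sqrt_sq_add hc)
    (integrable_inv_sqrt_sq_add_pow_three hc) hbot htop]
  ring

end Kernel

section Fubini

variable {f g : ℝ → ℝ}

lemma integral_inv_sqrt_sub_sq_add_pow_three {c : ℝ} (k : ℝ) (hc : 0 < c) :
    ∫ t, (√((t - k) ^ 2 + c) ^ 3)⁻¹ = 2 / c :=
  (integral_sub_right_eq_self (fun t => (√(t ^ 2 + c) ^ 3)⁻¹) k).trans
    (integral_inv_sqrt_sq_add_pow_three hc)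

lemma integrable_prod_inv_sqrt_sub_sq_add_pow_three (hf : Measurable f) (hg : Measurable g)
    (hg₀ : ∀ s, 0 < g s) (hgi : Integrable fun s => (g s)⁻¹) :
    Integrable fun p : ℝ × ℝ => (√((p.2 - f p.1) ^ 2 + g p.1) ^ 3)⁻¹ := by
  refine (integrable_prod_iff (by fun_prop : Measurable _).aestronglyMeasurable).2
    ⟨Eventually.of_forall fun s =>
      (integrable_inv_sqrt_sq_add_pow_three (hg₀ s)).comp_sub_right (f s), ?_⟩
  refine (hgi.const_mul 2).congr (Eventually.of_forall fun s => ?_)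
  simp only [norm_inv, norm_pow, norm_of_nonneg (sqrt_nonneg _)]
  rw [integral_inv_sqrt_sub_sq_add_pow_three _ (hg₀ s), div_eq_mul_inv]

lemma integral_prod_inv_sqrt_sub_sq_add_pow_three (hf : Measurable f) (hg : Measurable g)
    (hg₀ : ∀ s, 0 < g s) (hgi : Integrable fun s => (g s)⁻¹) :
    ∫ p : ℝ × ℝ, (√((p.2 - f p.1) ^ 2 + g p.1) ^ 3)⁻¹ = 2 * ∫ s, (g s)⁻¹ := by
  rw [Measure.volume_eq_prod,
    integral_prod _ (integrable_prod_inv_sqrt_sub_sq_add_pow_three hf hg hg₀ hgi),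
    ← integral_const_mul]
  congr 1 with s
  dsimp only
  rw [integral_inv_sqrt_sub_sq_add_pow_three _ (hg₀ s), div_eq_mul_inv]

end Fubini

section InnerProductSpace

variable {E : Type*} [NormedAddCommGroup E] [InnerProductSpace ℝ E]

lemma norm_sub_smul_sq_of_norm_eq_one {u : E} (hu : ‖u‖ = 1) (x : E) (t : ℝ) :
    ‖x - t • u‖ ^ 2 = (t - ⟪u, x⟫) ^ 2 + (‖x‖ ^ 2 - ⟪u, x⟫ ^ 2) := by
  rw [norm_sub_sq_real, norm_smul, inner_smul_right, real_inner_comm, hu, norm_eq_abs, mul_one,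
    sq_abs]
  ring

lemma inner_sq_le_norm_sq_of_norm_eq_one {u : E} (hu : ‖u‖ = 1) (x : E) :
    ⟪u, x⟫ ^ 2 ≤ ‖x‖ ^ 2 := by
  simpa [hu] using sq_le_sq' (neg_le_of_abs_le (abs_real_inner_le_norm u x))
    (le_of_abs_le (abs_real_inner_le_norm u x))

lemma norm_smul_add_sq_sub_inner_sq (u v w : E) (s : ℝ) :
    ‖s • v + w‖ ^ 2 - ⟪u, s • v + w⟫ ^ 2
      = (‖v‖ ^ 2 - ⟪u, v⟫ ^ 2) * (s * s) + 2 * (⟪v, w⟫ - ⟪u, v⟫ * ⟪u, w⟫) * s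
        + (‖w‖ ^ 2 - ⟪u, w⟫ ^ 2) := by
  rw [norm_add_sq_real, norm_smul, inner_add_right, inner_smul_right, inner_smul_left,
    norm_eq_abs, mul_pow, sq_abs]
  simp only [conj_trivial]
  ring

end InnerProductSpace

section TripleDet

variable (a b c : EuclideanSpace ℝ (Fin 3))

lemma tripleDet_smul_add_sub_smul (s t : ℝ) :
    tripleDet a b (s • a + c - t • b) = tripleDet a b c := by
  simp only [tripleDet, det_fin_three, of_apply, cons_val', cons_val_zero, cons_val_one,
    empty_val', cons_val_fin_one, head_fin_const, cons_val_two, tail_cons,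
    PiLp.add_apply, PiLp.sub_apply, PiLp.smul_apply, smul_eq_mul]
  ring

lemma tripleDet_sq :
    tripleDet a b c ^ 2 = ‖a‖ ^ 2 * ‖b‖ ^ 2 * ‖c‖ ^ 2 + 2 * ⟪a, b⟫ * ⟪a, c⟫ * ⟪b, c⟫
      - ‖a‖ ^ 2 * ⟪b, c⟫ ^ 2 - ‖b‖ ^ 2 * ⟪a, c⟫ ^ 2 - ‖c‖ ^ 2 * ⟪a, b⟫ ^ 2 := by
  simp only [← real_inner_self_eq_norm_sq, tripleDet, det_fin_three, of_apply, cons_val',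
    cons_val_zero, cons_val_one, empty_val', cons_val_fin_one, head_fin_const,
    cons_val_two, tail_cons, PiLp.inner_apply, RCLike.inner_apply, conj_trivial,
    Fin.sum_univ_three]
  ring

variable {a b}

lemma discrim_eq_neg_four_mul_tripleDet_sq (hb : ‖b‖ = 1) :
    discrim (‖a‖ ^ 2 - ⟪b, a⟫ ^ 2) (2 * (⟪a, c⟫ - ⟪b, a⟫ * ⟪b, c⟫)) (‖c‖ ^ 2 - ⟪b, c⟫ ^ 2)
      = -4 * tripleDet a b c ^ 2 := by
  rw [discrim, tripleDet_sq, hb, real_inner_comm a b]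
  ring

end TripleDet

lemma integral_inv_norm_smul_add_sub_smul_pow_three {n₁ n₂ w : EuclideanSpace ℝ (Fin 3)}
    (hn₂ : ‖n₂‖ = 1) (hd : tripleDet n₁ n₂ w ≠ 0) :
    Integrable (fun p : ℝ × ℝ => (‖p.1 • n₁ + w - p.2 • n₂‖ ^ 3)⁻¹) ∧
    ∫ p : ℝ × ℝ, (‖p.1 • n₁ + w - p.2 • n₂‖ ^ 3)⁻¹ = 2 * π / |tripleDet n₁ n₂ w| := by
  set A := ‖n₁‖ ^ 2 - ⟪n₂, n₁⟫ ^ 2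
  set B := 2 * (⟪n₁, w⟫ - ⟪n₂, n₁⟫ * ⟪n₂, w⟫)
  set C := ‖w‖ ^ 2 - ⟪n₂, w⟫ ^ 2
  have hdisc : discrim A B C < 0 := by
    rw [discrim_eq_neg_four_mul_tripleDet_sq w hn₂]
    linarith [pow_two_pos_of_ne_zero hd]
  have hA : 0 < A := by
    have hA_nonneg : 0 ≤ A := sub_nonneg.2 (inner_sq_le_norm_sq_of_norm_eq_one hn₂ n₁)
    refine hA_nonneg.lt_of_ne fun hA0 => ?_
    rw [discrim, ← hA0] at hdisc
    nlinarith
  have hnorm : ∀ p : ℝ × ℝ, ‖p.1 • n₁ + w - p.2 • n₂‖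
      = √((p.2 - ⟪n₂, p.1 • n₁ + w⟫) ^ 2 + (A * (p.1 * p.1) + B * p.1 + C)) := fun p => by
    rw [← norm_smul_add_sq_sub_inner_sq, ← norm_sub_smul_sq_of_norm_eq_one hn₂,
      sqrt_sq (norm_nonneg _)]
  simp_rw [hnorm]
  have hf : Measurable fun s : ℝ => ⟪n₂, s • n₁ + w⟫ := by fun_prop
  have hg : Measurable fun s : ℝ => A * (s * s) + B * s + C := by fun_prop
  have hg₀ := quadratic_pos_of_discrim_neg hA hdisc
  have hgi := integrable_inv_quadratic hA hdisc
  have hint := integrable_prod_inv_sqrt_sub_sq_add_pow_three hf hg hg₀ hgi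
  refine ⟨hint, ?_⟩
  have hroot : √(-discrim A B C) = 2 * |tripleDet n₁ n₂ w| := by
    rw [discrim_eq_neg_four_mul_tripleDet_sq w hn₂, show -(-4 * tripleDet n₁ n₂ w ^ 2)
      = (2 * tripleDet n₁ n₂ w) ^ 2 by ring, sqrt_sq_eq_abs, abs_mul, abs_two]
  have hval := integral_prod_inv_sqrt_sub_sq_add_pow_three hf hg hg₀ hgi
  rw [hval, integral_inv_quadratic hA hdisc, hroot]
  field_simp

theorem gauss_linking_integral_skew_lines_general
    (n₁ n₂ v₁ v₂ : EuclideanSpace ℝ (Fin 3))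
    (hn₂ : ‖n₂‖ = 1)
    (hd : tripleDet n₁ n₂ (v₁ - v₂) ≠ 0) :
    Integrable (fun p : ℝ × ℝ =>
        tripleDet n₁ n₂ ((p.1 • n₁ + v₁) - (p.2 • n₂ + v₂))
          / ‖(p.1 • n₁ + v₁) - (p.2 • n₂ + v₂)‖ ^ 3) ∧
    (1 / (4 * π)) * ∫ p : ℝ × ℝ,
        tripleDet n₁ n₂ ((p.1 • n₁ + v₁) - (p.2 • n₂ + v₂))
          / ‖(p.1 • n₁ + v₁) - (p.2 • n₂ + v₂)‖ ^ 3
      = (1 / 2) * Real.sign (tripleDet n₁ n₂ (v₁ - v₂)) := by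
  have hline : ∀ s t : ℝ, (s • n₁ + v₁) - (t • n₂ + v₂) = s • n₁ + (v₁ - v₂) - t • n₂ :=
    fun s t => by abel
  simp_rw [hline, tripleDet_smul_add_sub_smul, div_eq_mul_inv]
  obtain ⟨hint, hval⟩ := integral_inv_norm_smul_add_sub_smul_pow_three hn₂ hd
  refine ⟨hint.const_mul _, ?_⟩
  rw [integral_const_mul, hval, ← Real.div_abs_eq_sign]
  field_simp
  norm_num

/-- The Gauss linking integral of two oriented skew straight lines converges and
equals `±1/2`, with sign the sign of the triple product `(n₁, n₂, v₁ − v₂)`. -/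
theorem gauss_linking_integral_skew_lines
    (n₁ n₂ v₁ v₂ : EuclideanSpace ℝ (Fin 3))
    (hn₁ : ‖n₁‖ = 1) (hn₂ : ‖n₂‖ = 1)
    (hindep : LinearIndependent ℝ ![n₁, n₂])
    (hd : tripleDet n₁ n₂ (v₁ - v₂) ≠ 0) :
    Integrable (fun p : ℝ × ℝ =>
        tripleDet n₁ n₂ ((p.1 • n₁ + v₁) - (p.2 • n₂ + v₂))
          / ‖(p.1 • n₁ + v₁) - (p.2 • n₂ + v₂)‖ ^ 3) ∧
    (1 / (4 * π)) * ∫ p : ℝ × ℝ,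
        tripleDet n₁ n₂ ((p.1 • n₁ + v₁) - (p.2 • n₂ + v₂))
          / ‖(p.1 • n₁ + v₁) - (p.2 • n₂ + v₂)‖ ^ 3
      = (1 / 2) * Real.sign (tripleDet n₁ n₂ (v₁ - v₂)) :=
  gauss_linking_integral_skew_lines_general n₁ n₂ v₁ v₂ hn₂ hd
end
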